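/- arXiv:2310.15003 — 7 statements merged into one kernel-verified Lean document; each statement's English description precedes it below -/
import Mathlib

section
/- Let 0 < a ≤ 1 and 0 ≤ b ≤ 1 − a. Then the function f : [0, ∞) → [0, ∞) defined by f(t) = t^a · (log(1 + t))^b is continuous, concave, and monotonically increasing on [0, ∞), and satisfies f(0) = 0. -/
open Real Set

lemma amgm_key (a b : ℝ) (ha0 : 0 < a) (ha1 : a ≤ 1) (hb0 : 0 ≤ b) (hab : a + b ≤ 1)
    {u v u' v' l m : ℝ} (hu : 0 ≤ u) (hv : 0 ≤ v) (hu' : 0 ≤ u') (hv' : 0 ≤ v')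
    (hl : 0 ≤ l) (hm : 0 ≤ m) (hlm : l + m = 1) :
    l * (u ^ a * v ^ b) + m * (u' ^ a * v' ^ b) ≤
      (l * u + m * u') ^ a * (l * v + m * v') ^ b := by
  set U := l * u + m * u' with hUdef
  set V := l * v + m * v' with hVdef
  have hU : 0 ≤ U := by positivity
  have hV : 0 ≤ V := by positivity
  rcases hU.eq_or_lt with hU0 | hU0
  · -- U = 0 : both terms vanish
    have h1 : l * u = 0 ∧ m * u' = 0 := by
      constructor <;> nlinarith [mul_nonneg hl hu, mul_nonneg hm hu']
    have e1 : l * (u ^ a * v ^ b) = 0 := by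
      rcases mul_eq_zero.1 h1.1 with h | h
      · simp [h]
      · simp [h, Real.zero_rpow ha0.ne']
    have e2 : m * (u' ^ a * v' ^ b) = 0 := by
      rcases mul_eq_zero.1 h1.2 with h | h
      · simp [h]
      · simp [h, Real.zero_rpow ha0.ne']
    rw [e1, e2, add_zero]
    positivity
  · rcases hV.eq_or_lt with hV0 | hV0
    · -- V = 0
      rcases hb0.eq_or_lt with hb | hb
      · -- b = 0 : reduces to concavity of rpow
        simp only [← hb, Real.rpow_zero, mul_one]
        have := (Real.concaveOn_rpow ha0.le ha1).2 (mem_Ici.2 hu) (mem_Ici.2 hu') hl hm hlm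
        simpa [smul_eq_mul] using this
      · -- b > 0 : both sides vanish
        have h1 : l * v = 0 ∧ m * v' = 0 := by
          constructor <;> nlinarith [mul_nonneg hl hv, mul_nonneg hm hv']
        have e1 : l * (u ^ a * v ^ b) = 0 := by
          rcases mul_eq_zero.1 h1.1 with h | h
          · simp [h]
          · simp [h, Real.zero_rpow hb.ne']
        have e2 : m * (u' ^ a * v' ^ b) = 0 := by
          rcases mul_eq_zero.1 h1.2 with h | h
          · simp [h]
          · simp [h, Real.zero_rpow hb.ne']
        rw [e1, e2, ← hV0, Real.zero_rpow hb.ne']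
        simp
    · -- main case U > 0, V > 0
      have hW : (0:ℝ) < U ^ a * V ^ b := by positivity
      have key : ∀ x y : ℝ, 0 ≤ x → 0 ≤ y →
          x ^ a * y ^ b ≤ U ^ a * V ^ b * (a * (x / U) + b * (y / V) + (1 - a - b)) := by
        intro x y hx hy
        have h3 := Real.geom_mean_le_arith_mean3_weighted ha0.le hb0
          (by linarith : (0:ℝ) ≤ 1 - a - b) (by positivity : (0:ℝ) ≤ x / U)
          (by positivity : (0:ℝ) ≤ y / V) zero_le_one (by ring)
        rw [Real.one_rpow, mul_one] at h3
        have e : x ^ a * y ^ b = U ^ a * V ^ b * ((x / U) ^ a * (y / V) ^ b) := by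
          rw [Real.div_rpow hx hU0.le, Real.div_rpow hy hV0.le]
          field_simp
        rw [e]
        calc U ^ a * V ^ b * ((x / U) ^ a * (y / V) ^ b)
            ≤ U ^ a * V ^ b * (a * (x / U) + b * (y / V) + (1 - a - b) * 1) :=
              mul_le_mul_of_nonneg_left h3 hW.le
          _ = U ^ a * V ^ b * (a * (x / U) + b * (y / V) + (1 - a - b)) := by ring
      have t1 := mul_le_mul_of_nonneg_left (key u v hu hv) hl
      have t2 := mul_le_mul_of_nonneg_left (key u' v' hu' hv') hm
      have hcoef : l * (a * (u / U) + b * (v / V) + (1 - a - b))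
          + m * (a * (u' / U) + b * (v' / V) + (1 - a - b)) = 1 := by
        have e1 : (l * u + m * u') / U = 1 := by rw [← hUdef]; exact div_self hU0.ne'
        have e2 : (l * v + m * v') / V = 1 := by rw [← hVdef]; exact div_self hV0.ne'
        calc l * (a * (u / U) + b * (v / V) + (1 - a - b))
              + m * (a * (u' / U) + b * (v' / V) + (1 - a - b))
            = a * ((l * u + m * u') / U) + b * ((l * v + m * v') / V)
              + (1 - a - b) * (l + m) := by ring
          _ = a * 1 + b * 1 + (1 - a - b) * 1 := by rw [e1, e2, hlm]
          _ = 1 := by ring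
      have final : l * (U ^ a * V ^ b * (a * (u / U) + b * (v / V) + (1 - a - b)))
          + m * (U ^ a * V ^ b * (a * (u' / U) + b * (v' / V) + (1 - a - b)))
          = U ^ a * V ^ b := by
        calc l * (U ^ a * V ^ b * (a * (u / U) + b * (v / V) + (1 - a - b)))
              + m * (U ^ a * V ^ b * (a * (u' / U) + b * (v' / V) + (1 - a - b)))
            = U ^ a * V ^ b * (l * (a * (u / U) + b * (v / V) + (1 - a - b))
              + m * (a * (u' / U) + b * (v' / V) + (1 - a - b))) := by ring
          _ = U ^ a * V ^ b := by rw [hcoef, mul_one]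
      linarith [t1, t2]

/-- for `0 < a ≤ 1` and `0 ≤ b ≤ 1 - a`, the function
`f t = t ^ a * (log (1 + t)) ^ b` is continuous, concave and monotonically increasing
on `[0,∞)`, and `f 0 = 0`. -/
theorem rpow_mul_log_rpow_concave (a b : ℝ) (ha0 : 0 < a) (ha1 : a ≤ 1)
    (hb0 : 0 ≤ b) (hb1 : b ≤ 1 - a) :
    ContinuousOn (fun t : ℝ => t ^ a * Real.log (1 + t) ^ b) (Set.Ici 0) ∧
    ConcaveOn ℝ (Set.Ici 0) (fun t : ℝ => t ^ a * Real.log (1 + t) ^ b) ∧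
    MonotoneOn (fun t : ℝ => t ^ a * Real.log (1 + t) ^ b) (Set.Ici 0) ∧
    (fun t : ℝ => t ^ a * Real.log (1 + t) ^ b) 0 = 0 := by
  have hlog : ∀ t : ℝ, 0 ≤ t → 0 ≤ Real.log (1 + t) := fun t ht =>
    Real.log_nonneg (by linarith)
  refine ⟨?_, ?_, ?_, ?_⟩
  · -- continuity
    intro t ht
    apply ContinuousAt.continuousWithinAt
    have h1 : ContinuousAt (fun t : ℝ => t ^ a) t :=
      (Real.continuous_rpow_const ha0.le).continuousAt
    have h2 : ContinuousAt (fun t : ℝ => Real.log (1 + t) ^ b) t := by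
      apply ((Real.continuous_rpow_const hb0).continuousAt).comp
      exact (Real.continuousAt_log (by simp at ht ⊢; linarith)).comp
        (continuousAt_const.add continuousAt_id)
    exact h1.mul h2
  · -- concavity
    refine ⟨convex_Ici 0, fun x hx y hy l m hl hm hlm => ?_⟩
    simp only [smul_eq_mul] at *
    have hx0 : (0:ℝ) ≤ x := hx
    have hy0 : (0:ℝ) ≤ y := hy
    have step1 := amgm_key a b ha0 ha1 hb0 (by linarith)
      hx0 (hlog x hx0) hy0 (hlog y hy0) hl hm hlm
    have hlogcc : l * Real.log (1 + x) + m * Real.log (1 + y) ≤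
        Real.log (1 + (l * x + m * y)) := by
      have := strictConcaveOn_log_Ioi.concaveOn.2 (Set.mem_Ioi.2 (by linarith : (0:ℝ) < 1 + x))
        (Set.mem_Ioi.2 (by linarith : (0:ℝ) < 1 + y)) hl hm hlm
      simp only [smul_eq_mul] at this
      have e : l * (1 + x) + m * (1 + y) = 1 + (l * x + m * y) := by
        linear_combination hlm
      rw [e] at this
      exact this
    calc l * (x ^ a * Real.log (1 + x) ^ b) + m * (y ^ a * Real.log (1 + y) ^ b)
        ≤ (l * x + m * y) ^ a * (l * Real.log (1 + x) + m * Real.log (1 + y)) ^ b := step1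
      _ ≤ (l * x + m * y) ^ a * Real.log (1 + (l * x + m * y)) ^ b := by
          apply mul_le_mul_of_nonneg_left
          · exact Real.rpow_le_rpow (add_nonneg (mul_nonneg hl (hlog x hx0))
              (mul_nonneg hm (hlog y hy0))) hlogcc hb0
          · positivity
  · -- monotone
    intro s hs t ht hst
    have hs0 : (0:ℝ) ≤ s := hs
    have ht0 : (0:ℝ) ≤ t := ht
    apply mul_le_mul
    · exact Real.rpow_le_rpow hs0 hst ha0.le
    · exact Real.rpow_le_rpow (hlog s hs0) (Real.log_le_log (by linarith) (by linarith)) hb0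
    · exact Real.rpow_nonneg (hlog s hs0) b
    · positivity
  · simp [Real.zero_rpow ha0.ne']
end

section
/- Let V = {A, B, C, D, E} be a five-point set and let ρ : V × V → ℝ be the symmetric function with ρ(v, v) = 0 for all v and ρ(A,B) = 2, ρ(A,C) = 2, ρ(A,D) = 1, ρ(A,E) = 1, ρ(B,C) = 2, ρ(B,D) = 1, ρ(B,E) = 1, ρ(C,D) = 1, ρ(C,E) = 3, ρ(D,E) = 2. Then for every strictly convex real normed vector space Y there exists no map φ : V → Y satisfying ‖φ(u) − φ(v)‖_Y = ρ(u, v) for all u, v ∈ V. -/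
/-- The shortest-path distance matrix of the graph on `{A, B, C, D, E}` with edges
`{A,E}, {A,D}, {E,B}, {B,D}, {D,C}` (vertices ordered `A, B, C, D, E`). -/
def badGraphDist : Fin 5 → Fin 5 → ℝ := fun u v =>
  !![(0 : ℝ), 2, 2, 1, 1;
     2, 0, 2, 1, 1;
     2, 2, 0, 1, 3;
     1, 1, 1, 0, 2;
     1, 1, 3, 2, 0] u v

/-- the five-point metric space `badGraphDist` admits no isometric embedding
into any strictly convex real normed vector space `Y`. -/
theorem badGraph_no_strictly_convex_embedding
    (Y : Type*) [NormedAddCommGroup Y] [NormedSpace ℝ Y] [StrictConvexSpace ℝ Y] :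
    ¬ ∃ φ : Fin 5 → Y, ∀ u v : Fin 5, ‖φ u - φ v‖ = badGraphDist u v := by
  rintro ⟨φ, h⟩
  have hAD : ‖φ 0 - φ 3‖ = 1 := by simpa [badGraphDist] using h 0 3
  have hBD : ‖φ 1 - φ 3‖ = 1 := by simpa [badGraphDist] using h 1 3
  have hDC : ‖φ 3 - φ 2‖ = 1 := by simpa [badGraphDist] using h 3 2
  have hAC : ‖φ 0 - φ 2‖ = 2 := by simpa [badGraphDist] using h 0 2
  have hBC : ‖φ 1 - φ 2‖ = 2 := by simpa [badGraphDist] using h 1 2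
  have hAB : ‖φ 0 - φ 1‖ = 2 := by simpa [badGraphDist] using h 0 1
  have e1 : φ 0 - φ 3 = φ 3 - φ 2 := by
    apply eq_of_norm_eq_of_norm_add_eq (by rw [hAD, hDC])
    have : (φ 0 - φ 3) + (φ 3 - φ 2) = φ 0 - φ 2 := by abel
    rw [this, hAC, hAD, hDC]; norm_num
  have e2 : φ 1 - φ 3 = φ 3 - φ 2 := by
    apply eq_of_norm_eq_of_norm_add_eq (by rw [hBD, hDC])
    have : (φ 1 - φ 3) + (φ 3 - φ 2) = φ 1 - φ 2 := by abel
    rw [this, hBC, hBD, hDC]; norm_num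
  have : φ 0 = φ 1 := by
    have := e1.trans e2.symm
    linear_combination (norm := abel) this
  rw [this] at hAB
  simp at hAB
end

section
/- Let G be a finite connected simple graph that is a tree, and let dist denote its shortest-path graph distance. Then there exist a positive integer m and a map φ from the vertex set of G to ℝ^m such that ‖φ(u) − φ(v)‖² = dist(u, v) for all vertices u, v of G, where ‖·‖ is the Euclidean norm on ℝ^m. Equivalently, the snowflake (V(G), dist^{1/2}) embeds isometrically into Euclidean space ℝ^m. -/
/-!
Root the tree at `r` and send each vertex `v` to the indicator vector, indexed by edges, of the
edge set of the path from `r` to `v`. Crossing one edge toggles exactly that edge in this set, so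
along the path from `u` to `v`, whose edges are distinct, the two edge sets differ in exactly the
edges of that path. Hence the squared distance between the indicator vectors is `dist u v`.
-/

open SimpleGraph Finset
open scoped symmDiff

theorem Finset.singleton_symmDiff_of_notMem {α : Type*} [DecidableEq α] {a : α} {s : Finset α}
    (h : a ∉ s) : {a} ∆ s = insert a s := by
  rw [(disjoint_singleton_left.2 h).symmDiff_eq_sup, insert_eq]; rfl

noncomputable def EuclideanSpace.indicatorVec {ι : Type*} [DecidableEq ι] (s : Finset ι) :
    EuclideanSpace ℝ ι :=
  WithLp.toLp 2 fun i => if i ∈ s then 1 else 0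

theorem EuclideanSpace.sq_norm_indicatorVec_sub {ι : Type*} [Fintype ι] [DecidableEq ι]
    (s t : Finset ι) : ‖indicatorVec s - indicatorVec t‖ ^ 2 = #(s ∆ t) := by
  rw [EuclideanSpace.norm_sq_eq]
  have hterm (i : ι) :
      ‖(indicatorVec s - indicatorVec t) i‖ ^ 2 = if i ∈ s ∆ t then 1 else 0 := by
    by_cases hs : i ∈ s <;> by_cases ht : i ∈ t <;> simp [indicatorVec, hs, ht, mem_symmDiff]
  simp only [hterm, sum_boole, filter_mem_eq_inter, univ_inter]

namespace SimpleGraph.IsTree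

variable {V : Type*} {G : SimpleGraph V} (hG : G.IsTree) (r : V)

noncomputable def rootPath (v : V) : G.Walk r v := (hG.existsUnique_path r v).choose

theorem isPath_rootPath (v : V) : (hG.rootPath r v).IsPath :=
  (hG.existsUnique_path r v).choose_spec.1

theorem eq_rootPath {v : V} {p : G.Walk r v} (hp : p.IsPath) : p = hG.rootPath r v :=
  (hG.existsUnique_path r v).unique hp (hG.isPath_rootPath r v)

variable [DecidableEq V]

noncomputable def rootEdges (v : V) : Finset (Sym2 V) := (hG.rootPath r v).edges.toFinset

theorem rootEdges_eq_singleton_symmDiff_of_adj {v w : V} (hadj : G.Adj v w)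
    (hw : w ∉ (hG.rootPath r v).support) :
    hG.rootEdges r w = {s(v, w)} ∆ hG.rootEdges r v := by
  have hconcat := hG.eq_rootPath r ((hG.isPath_rootPath r v).concat hw hadj)
  have hnotMem : s(v, w) ∉ hG.rootEdges r v := fun he =>
    hw <| (hG.rootPath r v).snd_mem_support_of_mem_edges (List.mem_toFinset.1 he)
  rw [singleton_symmDiff_of_notMem hnotMem]
  simp [rootEdges, ← hconcat, List.toFinset_append]

theorem symmDiff_rootEdges_of_adj {v w : V} (hadj : G.Adj v w) :
    hG.rootEdges r v ∆ hG.rootEdges r w = {s(v, w)} := by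
  by_cases hw : w ∈ (hG.rootPath r v).support
  · have hv := hG.isAcyclic.ne_mem_support_of_support_of_adj_of_isPath
      (hG.isPath_rootPath r v) (hG.isPath_rootPath r w) hadj hw
    rw [hG.rootEdges_eq_singleton_symmDiff_of_adj r hadj.symm hv, Sym2.eq_swap,
      symmDiff_symmDiff_cancel_right]
  · rw [hG.rootEdges_eq_singleton_symmDiff_of_adj r hadj hw, symmDiff_comm,
      symmDiff_symmDiff_cancel_right]

theorem symmDiff_rootEdges_of_isTrail {u v : V} (p : G.Walk u v) (hp : p.IsTrail) :
    hG.rootEdges r u ∆ hG.rootEdges r v = p.edges.toFinset := by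
  induction p with
  | nil => simp
  | @cons u w v hadj q ih =>
    rw [Walk.isTrail_cons] at hp
    rw [← symmDiff_symmDiff_cancel_left (hG.rootEdges r w) (hG.rootEdges r v), ← symmDiff_assoc,
      hG.symmDiff_rootEdges_of_adj r hadj, ih hp.1,
      singleton_symmDiff_of_notMem (by simpa using hp.2)]
    simp

theorem card_symmDiff_rootEdges (u v : V) :
    #(hG.rootEdges r u ∆ hG.rootEdges r v) = G.dist u v := by
  obtain ⟨p, hp, hlen⟩ := hG.connected.exists_path_of_dist u v
  rw [hG.symmDiff_rootEdges_of_isTrail r p hp.isTrail, List.toFinset_card_of_nodup hp.edges_nodup,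
    Walk.length_edges, hlen]

end SimpleGraph.IsTree

/-- for a finite tree `G` with shortest-path distance `dist`, there is a map
`φ` of the vertices into some Euclidean space `ℝ^m` with `‖φ u - φ v‖² = dist u v`;
i.e. the `1/2`-snowflake of the tree metric embeds isometrically into Euclidean space. -/
theorem tree_sqrt_euclidean_embedding {V : Type*} [Fintype V]
    (G : SimpleGraph V) (hT : G.IsTree) :
    ∃ (m : ℕ) (φ : V → EuclideanSpace ℝ (Fin m)), 0 < m ∧
      ∀ u v : V, ‖φ u - φ v‖ ^ 2 = (G.dist u v : ℝ) := by
  classical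
  obtain ⟨r⟩ := hT.connected.nonempty
  let reindex := LinearIsometryEquiv.piLpCongrLeft 2 ℝ ℝ (Fintype.equivFin (Sym2 V))
  refine ⟨Fintype.card (Sym2 V),
    fun v => reindex (EuclideanSpace.indicatorVec (hT.rootEdges r v)),
    Fintype.card_pos_iff.2 ⟨s(r, r)⟩, fun u v => ?_⟩
  rw [← map_sub, LinearIsometryEquiv.norm_map, EuclideanSpace.sq_norm_indicatorVec_sub,
    hT.card_symmDiff_rootEdges]
end

section
/- For every pair of positive integers d and D, there exists a finite subset V ⊂ ℝ^D such that, with ρ(x, y) = ‖x − y‖^{1/2} for x, y ∈ V (where ‖·‖ is the Euclidean norm on ℝ^D), the pair (V, ρ) is a metric space that admits no isometric embedding into ℝ^n for any positive integer n ≤ d; that is, for every n ≤ d there is no map φ : V → ℝ^n with ‖φ(x) − φ(u)‖ = ρ(x, u) for all x, u ∈ V. -/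
/-- A real-valued distance function is a metric. -/
def IsMetricDist {X : Type*} (ρ : X → X → ℝ) : Prop :=
  (∀ x y, 0 ≤ ρ x y) ∧ (∀ x y, ρ x y = 0 ↔ x = y) ∧ (∀ x y, ρ x y = ρ y x) ∧
  (∀ x y z, ρ x z ≤ ρ x y + ρ y z)

/-! Under the `1/2`-snowflake the points `0, 1, …, d + 1` of a line have squared distances
`|i - j|`. By polarization, the `d + 1` unit steps of any isometric image of them are then
orthonormal, so the image spans a space of dimension at least `d + 1`. -/

theorem isMetricDist_dist_rpow {X : Type*} [MetricSpace X] {p : ℝ} (hp0 : 0 < p)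
    (hp1 : p ≤ 1) :
    IsMetricDist (fun x y : X => dist x y ^ p) := by
  refine ⟨fun x y => by positivity, fun x y => ?_, fun x y => by simp only [dist_comm],
    fun x y z => ?_⟩
  · rw [Real.rpow_eq_zero dist_nonneg hp0.ne', dist_eq_zero]
  · calc dist x z ^ p ≤ (dist x y + dist y z) ^ p := by gcongr; exact dist_triangle x y z
      _ ≤ dist x y ^ p + dist y z ^ p :=
        Real.rpow_add_le_add_rpow dist_nonneg dist_nonneg hp0.le hp1

theorem real_inner_sub_sub_eq {E : Type*} [NormedAddCommGroup E] [InnerProductSpace ℝ E]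
    (x y z w : E) :
    inner ℝ (x - y) (z - w) = (‖x - w‖ ^ 2 + ‖y - z‖ ^ 2 - ‖x - z‖ ^ 2 - ‖y - w‖ ^ 2) / 2 := by
  simp only [norm_sub_sq_real, inner_sub_left, inner_sub_right]
  ring

theorem Int.abs_add_one_add_abs_sub_one_sub_two_mul_abs (t : ℤ) :
    |t + 1| + |t - 1| - 2 * |t| = if t = 0 then 2 else 0 := by
  split_ifs with h
  · simp [h]
  · rcases lt_or_gt_of_ne h with h | h
    · rw [abs_of_nonpos (by omega), abs_of_neg (by omega), abs_of_neg h]; ring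
    · rw [abs_of_pos (by omega), abs_of_nonneg (by omega), abs_of_pos h]; ring

theorem orthonormal_succ_sub_of_sq_norm_sub_eq_abs {E : Type*} [NormedAddCommGroup E]
    [InnerProductSpace ℝ E] {m : ℕ} {φ : Fin (m + 1) → E}
    (hφ : ∀ i j, ‖φ i - φ j‖ ^ 2 = |(i : ℝ) - j|) :
    Orthonormal ℝ (fun k : Fin m => φ k.succ - φ k.castSucc) := by
  rw [orthonormal_iff_ite]
  intro k l
  rw [real_inner_sub_sub_eq, hφ, hφ, hφ, hφ]
  have key : ((|(k - l : ℤ) + 1| + |(k - l : ℤ) - 1| - 2 * |(k - l : ℤ)| : ℤ) : ℝ) =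
      if k = l then 2 else 0 := by
    simp only [Int.abs_add_one_add_abs_sub_one_sub_two_mul_abs, sub_eq_zero, Int.natCast_inj,
      Fin.val_inj]
    split_ifs <;> simp
  push_cast at key
  simp only [Fin.val_succ, Fin.val_castSucc, Nat.cast_add, Nat.cast_one]
  split_ifs at key ⊢ <;> ring_nf at key ⊢ <;> linarith

theorem le_finrank_of_sq_norm_sub_eq_abs {E : Type*} [NormedAddCommGroup E]
    [InnerProductSpace ℝ E] [FiniteDimensional ℝ E] {m : ℕ} {φ : Fin (m + 1) → E}
    (hφ : ∀ i j, ‖φ i - φ j‖ ^ 2 = |(i : ℝ) - j|) : m ≤ Module.finrank ℝ E := by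
  simpa using
    (orthonormal_succ_sub_of_sq_norm_sub_eq_abs hφ).linearIndependent.fintype_card_le_finrank

theorem snowflake_not_embeddable_low_dim_general (d D : ℕ) (hD : 0 < D) :
    ∃ V : Finset (EuclideanSpace ℝ (Fin D)),
      IsMetricDist (fun x y : V =>
        ‖(x : EuclideanSpace ℝ (Fin D)) - (y : EuclideanSpace ℝ (Fin D))‖ ^ (1/2 : ℝ)) ∧
      ∀ n : ℕ, 0 < n → n ≤ d →
        ¬ ∃ φ : V → EuclideanSpace ℝ (Fin n),
          ∀ x u : V,
            ‖φ x - φ u‖ =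
              ‖(x : EuclideanSpace ℝ (Fin D)) - (u : EuclideanSpace ℝ (Fin D))‖ ^ (1/2 : ℝ) := by
  let p (k : Fin (d + 2)) : EuclideanSpace ℝ (Fin D) := EuclideanSpace.single ⟨0, hD⟩ (k : ℝ)
  have hp (i j : Fin (d + 2)) : ‖p i - p j‖ = |(i : ℝ) - j| := by
    rw [← dist_eq_norm, PiLp.dist_single_same, Real.dist_eq]
  refine ⟨Finset.univ.image p, ?_, ?_⟩
  · simpa only [Subtype.dist_eq, dist_eq_norm] using
      isMetricDist_dist_rpow (X := Finset.univ.image p) one_half_pos one_half_lt_one.le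
  · rintro n - hnd ⟨φ, hφ⟩
    have h := le_finrank_of_sq_norm_sub_eq_abs
      (φ := fun k => φ ⟨p k, Finset.mem_image_of_mem p (Finset.mem_univ k)⟩) fun i j => by
        rw [hφ, ← Real.sqrt_eq_rpow, Real.sq_sqrt (norm_nonneg _), hp]
    rw [finrank_euclideanSpace_fin] at h
    omega

/-- for all positive integers `d, D`, there is a finite subset
`V ⊂ ℝ^D` such that, equipping `V` with the `1/2`-snowflake of the Euclidean metric,
`ρ(x,y) = ‖x - y‖^(1/2)`, the pair `(V, ρ)` is a metric space admitting no isometric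
embedding into `ℝ^n` for any positive `n ≤ d`. -/
theorem snowflake_not_embeddable_low_dim (d D : ℕ) (hd : 0 < d) (hD : 0 < D) :
    ∃ V : Finset (EuclideanSpace ℝ (Fin D)),
      IsMetricDist (fun x y : V =>
        ‖(x : EuclideanSpace ℝ (Fin D)) - (y : EuclideanSpace ℝ (Fin D))‖ ^ (1/2 : ℝ)) ∧
      ∀ n : ℕ, 0 < n → n ≤ d →
        ¬ ∃ φ : V → EuclideanSpace ℝ (Fin n),
          ∀ x u : V,
            ‖φ x - φ u‖ =
              ‖(x : EuclideanSpace ℝ (Fin D)) - (u : EuclideanSpace ℝ (Fin D))‖ ^ (1/2 : ℝ) :=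
  snowflake_not_embeddable_low_dim_general d D hD
end

section
/- Let μ be a finite Borel measure on [0, ∞) with μ((0, ∞)) > 0, and define f : [0, ∞) → [0, ∞) by f(t) = ∫₀^∞ e^{−t u} dμ(u). Then for every positive integer n, the function d_f(x, y) = f(0) − f(‖x − y‖) is a metric on ℝ^n (where ‖·‖ is the Euclidean norm), and this metric is bounded: d_f(x, y) ≤ μ([0, ∞)) for all x, y ∈ ℝ^n. -/
/-!
Write `g t = f 0 - f t = ∫ (1 - e^{-tu}) dμ(u)`. Each integrand `t ↦ 1 - e^{-tu}` with `u ≥ 0` is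
nondecreasing and subadditive on `[0, ∞)`, the latter because `(1 - e^{-su}) (1 - e^{-tu}) ≥ 0`;
both properties survive integration. A nondecreasing subadditive `g` with `g 0 = 0` that is
positive on `(0, ∞)` turns any metric `d` into the metric `g ∘ d`, and positivity of `g` is exactly
where `μ((0, ∞)) > 0` enters. Finally `g ≤ f 0 = μ([0, ∞))` since `f ≥ 0`.
-/

open MeasureTheory

open Set

theorem isMetricDist_comp_dist {X : Type*} [MetricSpace X] {g : ℝ → ℝ} (hg0 : g 0 = 0)
    (hpos : ∀ t, 0 < t → 0 < g t) (hmono : MonotoneOn g (Ici 0))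
    (hsub : ∀ s t, 0 ≤ s → 0 ≤ t → g (s + t) ≤ g s + g t) :
    IsMetricDist fun x y : X => g (dist x y) := by
  refine ⟨fun x y => ?_, fun x y => ⟨fun h => ?_, ?_⟩, fun x y => ?_, fun x y z => ?_⟩ <;>
    dsimp only at *
  · rcases (dist_nonneg (x := x) (y := y)).eq_or_lt with h | h
    · rw [← h, hg0]
    · exact (hpos _ h).le
  · exact dist_le_zero.1 (not_lt.1 fun hd => (hpos _ hd).ne' h)
  · rintro rfl
    rw [dist_self, hg0]
  · rw [dist_comm]
  · exact (hmono dist_nonneg (add_nonneg dist_nonneg dist_nonneg) (dist_triangle x y z)).trans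
      (hsub _ _ dist_nonneg dist_nonneg)

noncomputable def laplaceTransform (μ : Measure ℝ) (t : ℝ) : ℝ :=
  ∫ u, Real.exp (-(t * u)) ∂μ

section

variable {μ : Measure ℝ} {s t : ℝ}

theorem exp_neg_mul_le_one {u : ℝ} (ht : 0 ≤ t) (hu : 0 ≤ u) :
    Real.exp (-(t * u)) ≤ 1 :=
  Real.exp_le_one_iff.2 (neg_nonpos.2 (mul_nonneg ht hu))

theorem integrable_exp_neg_mul [IsFiniteMeasure μ] (hμ : ∀ᵐ u ∂μ, 0 ≤ u) (ht : 0 ≤ t) :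
    Integrable (fun u => Real.exp (-(t * u))) μ := by
  refine (integrable_const (1 : ℝ)).mono' (by fun_prop) ?_
  filter_upwards [hμ] with u hu
  rw [Real.norm_eq_abs, abs_of_pos (Real.exp_pos _)]
  exact exp_neg_mul_le_one ht hu

theorem laplaceTransform_nonneg (μ : Measure ℝ) (t : ℝ) : 0 ≤ laplaceTransform μ t :=
  integral_nonneg fun _ => (Real.exp_pos _).le

theorem laplaceTransform_zero (μ : Measure ℝ) : laplaceTransform μ 0 = μ.real univ := by
  simp [laplaceTransform]

theorem antitoneOn_laplaceTransform [IsFiniteMeasure μ] (hμ : ∀ᵐ u ∂μ, 0 ≤ u) :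
    AntitoneOn (laplaceTransform μ) (Ici 0) := by
  intro s hs t ht hst
  refine integral_mono_ae (integrable_exp_neg_mul hμ ht) (integrable_exp_neg_mul hμ hs) ?_
  filter_upwards [hμ] with u hu
  exact Real.exp_le_exp.2 (neg_le_neg (mul_le_mul_of_nonneg_right hst hu))

theorem laplaceTransform_lt_laplaceTransform_zero [IsFiniteMeasure μ] (hμ : ∀ᵐ u ∂μ, 0 ≤ u)
    (hpos : 0 < μ (Ioi 0)) (ht : 0 < t) : laplaceTransform μ t < laplaceTransform μ 0 := by
  have hint := integrable_exp_neg_mul hμ ht.le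
  have hgap : laplaceTransform μ 0 - laplaceTransform μ t =
      ∫ u, (1 - Real.exp (-(t * u))) ∂μ := by
    rw [laplaceTransform, laplaceTransform, integral_sub (integrable_const 1) hint]
    simp
  have hgap_nonneg : 0 ≤ᵐ[μ] fun u => 1 - Real.exp (-(t * u)) := by
    filter_upwards [hμ] with u hu
    exact sub_nonneg.2 (exp_neg_mul_le_one ht.le hu)
  have hsupport : Ioi 0 ⊆ Function.support fun u => 1 - Real.exp (-(t * u)) := fun u hu =>
    sub_ne_zero.2 (Real.exp_lt_one_iff.2 (neg_lt_zero.2 (mul_pos ht hu))).ne'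
  rw [← sub_pos, hgap, integral_pos_iff_support_of_nonneg_ae hgap_nonneg
    ((integrable_const 1).sub hint)]
  exact hpos.trans_le (measure_mono hsupport)

theorem laplaceTransform_add_le [IsFiniteMeasure μ] (hμ : ∀ᵐ u ∂μ, 0 ≤ u) (hs : 0 ≤ s)
    (ht : 0 ≤ t) :
    laplaceTransform μ s + laplaceTransform μ t ≤
      laplaceTransform μ 0 + laplaceTransform μ (s + t) := by
  have h0 := integrable_exp_neg_mul hμ le_rfl
  have h1 := integrable_exp_neg_mul hμ hs
  have h2 := integrable_exp_neg_mul hμ ht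
  have h3 := integrable_exp_neg_mul hμ (add_nonneg hs ht)
  simp only [laplaceTransform]
  rw [← integral_add h1 h2, ← integral_add h0 h3]
  refine integral_mono_ae (h1.add h2) (h0.add h3) ?_
  filter_upwards [hμ] with u hu
  have hprod : Real.exp (-((s + t) * u)) = Real.exp (-(s * u)) * Real.exp (-(t * u)) := by
    rw [← Real.exp_add]
    ring_nf
  simp only [zero_mul, neg_zero, Real.exp_zero, hprod]
  nlinarith [mul_nonneg (sub_nonneg.2 (exp_neg_mul_le_one hs hu))
    (sub_nonneg.2 (exp_neg_mul_le_one ht hu))]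

end

theorem laplace_transform_bounded_metric_general (μ : Measure ℝ) [IsFiniteMeasure μ]
    (hsupp : μ (Set.Iio 0) = 0) (hpos : 0 < μ (Set.Ioi 0))
    (f : ℝ → ℝ) (hf : ∀ t : ℝ, f t = ∫ u, Real.exp (-(t * u)) ∂μ)
    (n : ℕ) :
    IsMetricDist (fun x y : EuclideanSpace ℝ (Fin n) => f 0 - f ‖x - y‖) ∧
    ∀ x y : EuclideanSpace ℝ (Fin n), f 0 - f ‖x - y‖ ≤ (μ (Set.Ici 0)).toReal := by
  obtain rfl : f = laplaceTransform μ := funext hf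
  have hμ : ∀ᵐ u ∂μ, 0 ≤ u := by
    rw [ae_iff]
    simpa only [not_le, Iio_def] using hsupp
  refine ⟨?_, fun x y => ?_⟩
  · simp_rw [← dist_eq_norm]
    exact isMetricDist_comp_dist (g := fun t => laplaceTransform μ 0 - laplaceTransform μ t)
      (sub_self _)
      (fun t ht => sub_pos.2 (laplaceTransform_lt_laplaceTransform_zero hμ hpos ht))
      (fun s hs t ht hst => sub_le_sub_left (antitoneOn_laplaceTransform hμ hs ht hst) _)
      (fun s t hs ht => by linarith [laplaceTransform_add_le hμ hs ht])
  · have hIci : μ (Ici 0) = μ univ := measure_congr (ae_eq_univ.2 (by rwa [compl_Ici]))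
    rw [hIci, ← measureReal_def, ← laplaceTransform_zero]
    linarith [laplaceTransform_nonneg μ ‖x - y‖]

/-- let `μ` be a finite Borel measure on `[0,∞)` with `μ((0,∞)) > 0` and let
`f t = ∫ e^{-t u} dμ(u)` be its Laplace transform. Then for every positive `n`, the function
`d_f(x,y) = f 0 - f ‖x - y‖` is a metric on `ℝ^n`, bounded by `μ([0,∞))`. -/
theorem laplace_transform_bounded_metric (μ : Measure ℝ) [IsFiniteMeasure μ]
    (hsupp : μ (Set.Iio 0) = 0) (hpos : 0 < μ (Set.Ioi 0))
    (f : ℝ → ℝ) (hf : ∀ t : ℝ, f t = ∫ u, Real.exp (-(t * u)) ∂μ)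
    (n : ℕ) (hn : 0 < n) :
    IsMetricDist (fun x y : EuclideanSpace ℝ (Fin n) => f 0 - f ‖x - y‖) ∧
    ∀ x y : EuclideanSpace ℝ (Fin n), f 0 - f ‖x - y‖ ≤ (μ (Set.Ici 0)).toReal :=
  laplace_transform_bounded_metric_general μ hsupp hpos f hf n
end

section
/- Let K be a positive integer, let 0 < r₁, …, r_K ≤ 1, and let 0 < β ≤ 1. Then the function f(t) = (1 + Σₖ₌₁ᴷ t^{r_k})^{−β} is completely monotone on (0, ∞): f is infinitely differentiable on (0, ∞) and (−1)^n f^{(n)}(t) ≥ 0 for every t > 0 and every non-negative integer n. -/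
open Set

noncomputable section CMaux

variable {K : ℕ} {r : Fin K → ℝ}

/-- The auxiliary base function. -/
def hfun (r : Fin K → ℝ) (t : ℝ) : ℝ := 1 + ∑ k, t ^ r k

/-- Class of nonnegative combinations of `t^a * h t ^ (-s)` with `a ≤ 0 < s`. -/
inductive Good (r : Fin K → ℝ) : (ℝ → ℝ) → Prop
  | base (a s : ℝ) (ha : a ≤ 0) (hs : 0 < s) :
      Good r (fun t => t ^ a * hfun r t ^ (-s))
  | zero : Good r (fun _ => 0)
  | add {g₁ g₂ : ℝ → ℝ} : Good r g₁ → Good r g₂ → Good r (fun t => g₁ t + g₂ t)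
  | smul {g : ℝ → ℝ} (c : ℝ) (hc : 0 ≤ c) : Good r g → Good r (fun t => c * g t)

lemma hfun_pos (r : Fin K → ℝ) {t : ℝ} (ht : 0 < t) : 0 < hfun r t := by
  have : (0:ℝ) ≤ ∑ k, t ^ r k :=
    Finset.sum_nonneg fun k _ => Real.rpow_nonneg ht.le _
  unfold hfun; linarith

lemma good_nonneg {g : ℝ → ℝ} (hg : Good r g) : ∀ t ∈ Ioi (0:ℝ), 0 ≤ g t := by
  induction hg with
  | base a s ha hs =>
      intro t ht
      exact mul_nonneg (Real.rpow_nonneg (le_of_lt ht) _)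
        (Real.rpow_nonneg (hfun_pos r ht).le _)
  | zero => intro t _; exact le_refl 0
  | add h₁ h₂ ih₁ ih₂ => intro t ht; exact add_nonneg (ih₁ t ht) (ih₂ t ht)
  | smul c hc _ ih => intro t ht; exact mul_nonneg hc (ih t ht)

lemma good_sum {ι : Type*} (s : Finset ι) (g : ι → ℝ → ℝ)
    (hg : ∀ i ∈ s, Good r (g i)) : Good r (fun t => ∑ i ∈ s, g i t) := by
  classical
  induction s using Finset.induction with
  | empty => simpa using Good.zero (r := r)
  | insert _ _ hi ih =>
      rename_i a s
      have : (fun t => ∑ i ∈ insert a s, g i t)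
          = fun t => g a t + ∑ i ∈ s, g i t := by
        funext t; rw [Finset.sum_insert hi]
      rw [this]
      exact Good.add (hg a (Finset.mem_insert_self a s))
        (ih fun i hi' => hg i (Finset.mem_insert_of_mem hi'))

lemma hfun_hasDerivAt (r : Fin K → ℝ) (hr0 : ∀ k, 0 < r k) {t : ℝ} (ht : 0 < t) :
    HasDerivAt (hfun r) (∑ k, r k * t ^ (r k - 1)) t := by
  have : HasDerivAt (fun t : ℝ => ∑ k, t ^ r k) (∑ k, r k * t ^ (r k - 1)) t :=
    HasDerivAt.fun_sum fun k _ => Real.hasDerivAt_rpow_const (Or.inl ht.ne')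
  exact ((hasDerivAt_const t (1:ℝ)).fun_add this).congr_deriv (zero_add _)

lemma good_deriv (hr0 : ∀ k, 0 < r k) (hr1 : ∀ k, r k ≤ 1)
    {g : ℝ → ℝ} (hg : Good r g) :
    ∃ g', Good r g' ∧ ∀ t ∈ Ioi (0:ℝ), HasDerivAt g (-(g' t)) t := by
  induction hg with
  | base a s ha hs =>
      refine ⟨fun t => (-a) * (t ^ (a-1) * hfun r t ^ (-s))
        + s * ∑ k, r k * (t ^ (a + r k - 1) * hfun r t ^ (-(s+1))), ?_, ?_⟩
      · exact Good.add
          (Good.smul _ (by linarith) (Good.base (a-1) s (by linarith) hs))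
          (Good.smul _ hs.le (good_sum Finset.univ _ fun k _ =>
            Good.smul _ (hr0 k).le
              (Good.base (a + r k - 1) (s+1) (by have := hr1 k; linarith)
                (by linarith))))
      · intro t ht
        have ht : (0:ℝ) < t := ht
        have hpos := hfun_pos r ht
        have h1 : HasDerivAt (fun t : ℝ => t ^ a) (a * t ^ (a-1)) t :=
          Real.hasDerivAt_rpow_const (Or.inl ht.ne')
        have h2 : HasDerivAt (fun t => hfun r t ^ (-s))
            ((∑ k, r k * t ^ (r k - 1)) * (-s) * hfun r t ^ (-s - 1)) t :=
          (hfun_hasDerivAt r hr0 ht).rpow_const (Or.inl hpos.ne')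
        have h3 := h1.fun_mul h2
        refine h3.congr_deriv (Eq.symm ?_)
        have hsum : ∑ k, r k * (t ^ (a + r k - 1) * hfun r t ^ (-(s+1)))
            = t ^ a * hfun r t ^ (-s - 1) * ∑ k, r k * t ^ (r k - 1) := by
          rw [Finset.mul_sum]
          refine Finset.sum_congr rfl fun k _ => ?_
          have he : t ^ (a + r k - 1) = t ^ a * t ^ (r k - 1) := by
            rw [← Real.rpow_add ht]; ring_nf
          have he2 : hfun r t ^ (-(s+1)) = hfun r t ^ (-s - 1) := by ring_nf
          rw [he, he2]; ring
        show -((-a) * (t ^ (a-1) * hfun r t ^ (-s))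
          + s * ∑ k, r k * (t ^ (a + r k - 1) * hfun r t ^ (-(s+1)))) = _
        rw [hsum]; ring
  | zero =>
      exact ⟨fun _ => 0, Good.zero, fun t _ => by
        simpa using hasDerivAt_const t (0:ℝ)⟩
  | add h₁ h₂ ih₁ ih₂ =>
      obtain ⟨g₁', hg₁', hd₁⟩ := ih₁
      obtain ⟨g₂', hg₂', hd₂⟩ := ih₂
      refine ⟨fun t => g₁' t + g₂' t, Good.add hg₁' hg₂', fun t ht => ?_⟩
      have := (hd₁ t ht).fun_add (hd₂ t ht)
      exact this.congr_deriv (by ring)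
  | smul c hc _ ih =>
      obtain ⟨g', hg', hd⟩ := ih
      refine ⟨fun t => c * g' t, Good.smul c hc hg', fun t ht => ?_⟩
      have := (hd t ht).const_mul c
      exact this.congr_deriv (by ring)

end CMaux

/-- for `0 < r₁, …, r_K ≤ 1` and `0 < β ≤ 1`, the function
`f t = (1 + ∑ k, t ^ r k) ^ (-β)` is completely monotone on `(0,∞)`: it is smooth there
and `(-1)^n f⁽ⁿ⁾(t) ≥ 0` for every `t > 0` and every non-negative integer `n`. -/
theorem inverse_multiquadric_completely_monotone (K : ℕ) (hK : 0 < K)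
    (r : Fin K → ℝ) (hr0 : ∀ k, 0 < r k) (hr1 : ∀ k, r k ≤ 1)
    (β : ℝ) (hβ0 : 0 < β) (hβ1 : β ≤ 1) :
    ContDiffOn ℝ (⊤ : ℕ∞) (fun t : ℝ => (1 + ∑ k, t ^ r k) ^ (-β)) (Set.Ioi 0) ∧
    ∀ n : ℕ, ∀ t ∈ Set.Ioi (0 : ℝ),
      0 ≤ (-1 : ℝ) ^ n *
        iteratedDerivWithin n (fun t : ℝ => (1 + ∑ k, t ^ r k) ^ (-β)) (Set.Ioi 0) t := by
  set f : ℝ → ℝ := fun t => (1 + ∑ k, t ^ r k) ^ (-β) with hf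
  have hff : ∀ t : ℝ, f t = hfun r t ^ (-β) := fun t => rfl
  have hud : UniqueDiffOn ℝ (Set.Ioi (0:ℝ)) := isOpen_Ioi.uniqueDiffOn
  constructor
  · intro t ht
    have ht : (0:ℝ) < t := ht
    have hh : ContDiffAt ℝ (⊤ : ℕ∞) (hfun r) t := by
      unfold hfun
      exact contDiffAt_const.add (ContDiffAt.sum fun k _ =>
        Real.contDiffAt_rpow_const_of_ne ht.ne')
    exact ((hh.rpow_const_of_ne (hfun_pos r ht).ne')).contDiffWithinAt
  · have key : ∀ n : ℕ, ∃ g, Good r g ∧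
        Set.EqOn (iteratedDerivWithin n f (Set.Ioi 0))
          (fun t => (-1:ℝ) ^ n * g t) (Set.Ioi 0) := by
      intro n
      induction n with
      | zero =>
          refine ⟨fun t => t ^ (0:ℝ) * hfun r t ^ (-β), Good.base 0 β le_rfl hβ0, ?_⟩
          intro t ht
          simp [iteratedDerivWithin_zero, hff, Real.rpow_zero]
      | succ n ih =>
          obtain ⟨g, hg, heq⟩ := ih
          obtain ⟨g', hg', hd⟩ := good_deriv hr0 hr1 hg
          refine ⟨g', hg', fun t ht => ?_⟩
          have ht' : (0:ℝ) < t := ht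
          rw [iteratedDerivWithin_succ,
            derivWithin_congr heq (heq ht)]
          have hder : HasDerivAt (fun t => (-1:ℝ)^n * g t)
              ((-1:ℝ)^n * (-(g' t))) t := (hd t ht).const_mul _
          rw [hder.hasDerivWithinAt.derivWithin (hud t ht)]
          ring
    intro n t ht
    obtain ⟨g, hg, heq⟩ := key n
    rw [heq ht]
    have := good_nonneg hg t ht
    have h1 : ((-1:ℝ)^n * ((-1:ℝ)^n * g t)) = g t := by
      rw [← mul_assoc, ← pow_add, Even.neg_one_pow ⟨n, by ring⟩, one_mul]
    rw [h1]; exact this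
end

section
/- Let 0 < ε' ≤ ε and suppose the finite metric space (X, d^ε) admits an isometric embedding into some Euclidean space ℝ^m, i.e., there is φ : X → ℝ^m with ‖φ(u) − φ(v)‖ = d(u, v)^ε for all u, v ∈ X. Then (X, d^{ε'}) also admits an isometric embedding into some Euclidean space: there exist m' ∈ ℕ and ψ : X → ℝ^{m'} with ‖ψ(u) − ψ(v)‖ = d(u, v)^{ε'} for all u, v ∈ X. -/
/-!
Schoenberg's theory of conditionally negative semidefinite kernels. Taylor expansion and the
Schur product theorem make the Gaussian kernels `exp (-t ‖x - y‖²)` positive semidefinite, so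
`1 - exp (-t ‖x - y‖²)` is conditionally negative semidefinite for every `t ≥ 0`. For
`0 < α < 1`, the identity `s ^ α = C⁻¹ ∫₀^∞ (1 - exp (-t s)) t ^ (-1 - α) dt` exhibits
`(‖x - y‖²) ^ α` as a nonnegative mixture of these kernels, hence conditionally negative
semidefinite as well. Finally, a symmetric conditionally negative semidefinite matrix with zero
diagonal is a matrix of squared Euclidean distances: anchoring at a base point turns it into a
positive semidefinite matrix, i.e. a Gram matrix. Applied to `α = ε' / ε` and
`‖φ u - φ v‖² = dist u v ^ (2 ε)`, this embeds the `ε'`-snowflake.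
-/

section Schoenberg

open Matrix Real MeasureTheory Set
open scoped InnerProductSpace MatrixOrder ComplexOrder

variable {n : Type*} [Fintype n]

namespace Matrix

section PositiveSemidefinite

variable {E : Type*} [NormedAddCommGroup E] [InnerProductSpace ℝ E]

theorem posSemidef_of_inner_pow (v : n → E) (k : ℕ) :
    (of fun i j => ⟪v i, v j⟫_ℝ ^ k).PosSemidef := by
  induction k with
  | zero => simpa [vecMulVec] using posSemidef_vecMulVec_self_star (1 : n → ℝ)
  | succ k ih =>
    have h : (of fun i j => ⟪v i, v j⟫_ℝ ^ (k + 1)) =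
        (of fun i j => ⟪v i, v j⟫_ℝ ^ k) ⊙ gram ℝ v := by
      ext i j
      simp [pow_succ]
    rw [h]
    exact ih.hadamard (posSemidef_gram ℝ v)

theorem posSemidef_exp_mul_inner (v : n → E) {r : ℝ} (hr : 0 ≤ r) :
    (of fun i j => exp (r * ⟪v i, v j⟫_ℝ)).PosSemidef := by
  refine .of_dotProduct_mulVec_nonneg ?_ fun c => ?_
  · ext i j
    simp [real_inner_comm]
  have hsum : HasSum (fun k : ℕ => (r ^ k / k.factorial) *
      (star c ⬝ᵥ (of fun i j => ⟪v i, v j⟫_ℝ ^ k) *ᵥ c))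
      (star c ⬝ᵥ (of fun i j => exp (r * ⟪v i, v j⟫_ℝ)) *ᵥ c) := by
    simp only [dotProduct, mulVec, of_apply, star_trivial, Finset.mul_sum]
    refine hasSum_sum fun i _ => hasSum_sum fun j _ => ?_
    convert! (NormedSpace.expSeries_div_hasSum_exp (r * ⟪v i, v j⟫_ℝ)).mul_left (c i * c j)
      using 1
    · ext k
      rw [mul_pow]
      ring
    · rw [← exp_eq_exp_ℝ]
      ring
  exact hsum.nonneg fun k => mul_nonneg (by positivity)
    ((posSemidef_of_inner_pow v k).dotProduct_mulVec_nonneg c)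

theorem posSemidef_exp_neg_mul_norm_sub_sq (v : n → E) {t : ℝ} (ht : 0 ≤ t) :
    (of fun i j => exp (-(t * ‖v i - v j‖ ^ 2))).PosSemidef := by
  let f : n → ℝ := fun i => exp (-(t * ‖v i‖ ^ 2))
  have h : (of fun i j => exp (-(t * ‖v i - v j‖ ^ 2))) =
      vecMulVec f (star f) ⊙ of fun i j => exp (2 * t * ⟪v i, v j⟫_ℝ) := by
    ext i j
    simp only [of_apply, hadamard_apply, vecMulVec_apply, star_trivial, f, ← exp_add,
      norm_sub_sq_real]
    ring_nf
  rw [h]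
  exact (posSemidef_vecMulVec_self_star f).hadamard (posSemidef_exp_mul_inner v (by positivity))

theorem PosSemidef.exists_eq_gram {𝕜 : Type*} [RCLike 𝕜] {A : Matrix n n 𝕜}
    (hA : A.PosSemidef) : ∃ v : n → EuclideanSpace 𝕜 n, A = gram 𝕜 v := by
  classical
  obtain ⟨B, rfl⟩ := CStarAlgebra.nonneg_iff_eq_star_mul_self.mp hA.nonneg
  refine ⟨fun i => WithLp.toLp 2 fun k => B k i, ?_⟩
  ext i j
  simp [gram_apply, mul_apply, PiLp.inner_apply, mul_comm]

end PositiveSemidefinite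

def CondNegSemidef (M : Matrix n n ℝ) : Prop :=
  ∀ b : n → ℝ, ∑ i, b i = 0 → b ⬝ᵥ M *ᵥ b ≤ 0

theorem PosSemidef.condNegSemidef_one_sub {A : Matrix n n ℝ} (hA : A.PosSemidef) :
    (of fun i j => 1 - A i j).CondNegSemidef := by
  intro b hb
  have hones : (of fun _ _ => 1 : Matrix n n ℝ) *ᵥ b = 0 := by
    ext i
    simp [mulVec, dotProduct, hb]
  have h : (of fun i j => 1 - A i j) = (of fun _ _ => 1 : Matrix n n ℝ) - A := by
    ext i j
    simp
  rw [h, sub_mulVec, hones, zero_sub, dotProduct_neg, neg_nonpos]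
  simpa using hA.dotProduct_mulVec_nonneg b

theorem CondNegSemidef.smul {M : Matrix n n ℝ} (hM : M.CondNegSemidef) {c : ℝ} (hc : 0 ≤ c) :
    (c • M).CondNegSemidef := fun b hb => by
  rw [smul_mulVec, dotProduct_smul, smul_eq_mul]
  exact mul_nonpos_of_nonneg_of_nonpos hc (hM b hb)

theorem condNegSemidef_integral {Ω : Type*} [MeasurableSpace Ω] {μ : Measure Ω}
    {K : Ω → Matrix n n ℝ} (hK : ∀ᵐ t ∂μ, (K t).CondNegSemidef)
    (hint : ∀ i j, Integrable (fun t => K t i j) μ) :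
    (of fun i j => ∫ t, K t i j ∂μ).CondNegSemidef := by
  intro b hb
  have hterm : ∀ i j, Integrable (fun t => b i * (K t i j * b j)) μ :=
    fun i j => ((hint i j).mul_const _).const_mul _
  have h : b ⬝ᵥ (of fun i j => ∫ t, K t i j ∂μ) *ᵥ b = ∫ t, b ⬝ᵥ K t *ᵥ b ∂μ := by
    simp only [dotProduct, mulVec, of_apply, Finset.mul_sum]
    rw [integral_finsetSum _ fun i _ => integrable_finsetSum _ fun j _ => hterm i j]
    refine Finset.sum_congr rfl fun i _ => ?_
    rw [integral_finsetSum _ fun j _ => hterm i j]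
    exact Finset.sum_congr rfl fun j _ => by rw [integral_const_mul, integral_mul_const]
  rw [h]
  exact integral_nonpos_of_ae (hK.mono fun t ht => ht b hb)

/-- At `c`, the quadratic form of the anchored matrix is `-1/2` times that of `M` at the
zero-sum vector `b = c - (∑ c) • e_{i₀}`. -/
theorem CondNegSemidef.posSemidef_of_basepoint [DecidableEq n] {M : Matrix n n ℝ}
    (hM : M.CondNegSemidef) (hsymm : M.IsSymm) (hdiag : ∀ i, M i i = 0) (i₀ : n) :
    (of fun i j => (M i i₀ + M j i₀ - M i j) / 2).PosSemidef := by
  have hG : (of fun i j => (M i i₀ + M j i₀ - M i j) / 2) =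
      (1 / 2 : ℝ) • (vecMulVec (M.col i₀) 1 + vecMulVec 1 (M.col i₀) - M) := by
    ext i j
    simp
    ring
  have hrow : M.row i₀ = M.col i₀ := by
    ext j
    exact (hsymm.apply i₀ j).symm
  refine .of_dotProduct_mulVec_nonneg ?_ fun c => ?_
  · ext i j
    simp [hsymm.apply i j]
    ring
  set b := c - (∑ i, c i) • Pi.single i₀ 1
  have hb : ∑ i, b i = 0 := by simp [b, Finset.sum_sub_distrib, Pi.single_apply]
  have hMb : b ⬝ᵥ M *ᵥ b = c ⬝ᵥ M *ᵥ c - 2 * (∑ i, c i) * (c ⬝ᵥ M.col i₀) := by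
    simp only [b, mulVec_sub, mulVec_smul, mulVec_single_one, sub_dotProduct, dotProduct_sub,
      smul_dotProduct, dotProduct_smul, single_one_dotProduct, smul_eq_mul]
    rw [show (M *ᵥ c) i₀ = M.row i₀ ⬝ᵥ c from rfl, hrow, col_apply, hdiag,
      dotProduct_comm (M.col i₀) c]
    ring
  have hnonpos := hM b hb
  rw [hMb] at hnonpos
  rw [hG, smul_mulVec, dotProduct_smul, sub_mulVec, add_mulVec, vecMulVec_mulVec,
    vecMulVec_mulVec, dotProduct_sub, dotProduct_add]
  simp only [star_trivial, dotProduct_smul, one_dotProduct, MulOpposite.smul_eq_mul_unop,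
    MulOpposite.unop_op, smul_eq_mul, dotProduct_one]
  rw [dotProduct_comm (M.col i₀) c]
  linarith

theorem CondNegSemidef.exists_norm_sub_sq_eq {M : Matrix n n ℝ} (hM : M.CondNegSemidef)
    (hsymm : M.IsSymm) (hdiag : ∀ i, M i i = 0) :
    ∃ ψ : n → EuclideanSpace ℝ n, ∀ i j, ‖ψ i - ψ j‖ ^ 2 = M i j := by
  classical
  rcases isEmpty_or_nonempty n with hn | ⟨⟨i₀⟩⟩
  · exact ⟨fun _ => 0, fun i => isEmptyElim i⟩
  obtain ⟨ψ, hψ⟩ := (hM.posSemidef_of_basepoint hsymm hdiag i₀).exists_eq_gram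
  have hinner : ∀ i j, ⟪ψ i, ψ j⟫_ℝ = (M i i₀ + M j i₀ - M i j) / 2 := fun i j => by
    rw [← gram_apply, ← hψ, of_apply]
  refine ⟨ψ, fun i j => ?_⟩
  rw [norm_sub_sq_real, ← real_inner_self_eq_norm_sq, ← real_inner_self_eq_norm_sq, hinner,
    hinner, hinner, hdiag, hdiag]
  ring

end Matrix

section FractionalPower

variable {α : ℝ}

theorem one_sub_exp_neg_le_min (u : ℝ) : 1 - exp (-u) ≤ min u 1 :=
  le_min (by linarith [add_one_le_exp (-u)]) (by linarith [exp_pos (-u)])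

theorem integrableOn_one_sub_exp_neg_mul_rpow (hα : 0 < α) (hα1 : α < 1) :
    IntegrableOn (fun u : ℝ => (1 - exp (-u)) * u ^ (-1 - α)) (Ioi 0) := by
  have hmeas : AEStronglyMeasurable (fun u : ℝ => (1 - exp (-u)) * u ^ (-1 - α)) :=
    (by fun_prop : Measurable fun u : ℝ => (1 - exp (-u)) * u ^ (-1 - α)).aestronglyMeasurable
  have hbound : ∀ u : ℝ, 0 < u →
      ‖(1 - exp (-u)) * u ^ (-1 - α)‖ ≤ min u 1 * u ^ (-1 - α) := by
    intro u hu
    rw [norm_of_nonneg (mul_nonneg (by simp [hu.le]) (rpow_nonneg hu.le _))]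
    exact mul_le_mul_of_nonneg_right (one_sub_exp_neg_le_min u) (rpow_nonneg hu.le _)
  rw [← Ioc_union_Ioi_eq_Ioi zero_le_one]
  refine IntegrableOn.union ?_ ?_
  · have hint : IntegrableOn (fun u : ℝ => u ^ (-α)) (Ioc 0 1) :=
      ((intervalIntegral.integrableOn_Ioo_rpow_iff one_pos).2 (by linarith)).congr_set_ae
        Ioo_ae_eq_Ioc.symm
    refine hint.mono' hmeas.restrict ((ae_restrict_iff' measurableSet_Ioc).2 <| .of_forall ?_)
    intro u hu
    refine (hbound u hu.1).trans_eq ?_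
    rw [min_eq_left hu.2, ← rpow_one_add' hu.1.le (by linarith)]
    ring_nf
  · refine (integrableOn_Ioi_rpow_of_lt (a := -1 - α) (by linarith) one_pos).mono'
      hmeas.restrict ((ae_restrict_iff' measurableSet_Ioi).2 <| .of_forall fun u hu => ?_)
    refine (hbound u (zero_lt_one.trans hu)).trans_eq ?_
    rw [min_eq_right hu.le, one_mul]

theorem integral_one_sub_exp_neg_mul_rpow_pos (hα : 0 < α) (hα1 : α < 1) :
    0 < ∫ u in Ioi 0, (1 - exp (-u)) * u ^ (-1 - α) := by
  have hpos : ∀ u ∈ Ioi (0 : ℝ), 0 < (1 - exp (-u)) * u ^ (-1 - α) := fun u hu =>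
    mul_pos (by simpa using (hu : (0 : ℝ) < u)) (rpow_pos_of_pos hu _)
  rw [setIntegral_pos_iff_support_of_nonneg_ae
    ((ae_restrict_iff' measurableSet_Ioi).2 <| .of_forall fun u hu => (hpos u hu).le)
    (integrableOn_one_sub_exp_neg_mul_rpow hα hα1),
    inter_eq_right.2 fun u hu => Function.mem_support.2 (hpos u hu).ne']
  simp

theorem one_sub_exp_neg_mul_mul_rpow_eq {s t : ℝ} (hs : 0 < s) (ht : 0 < t) :
    (1 - exp (-(t * s))) * t ^ (-1 - α) =
      s ^ (1 + α) * ((1 - exp (-(s * t))) * (s * t) ^ (-1 - α)) := by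
  rw [mul_rpow hs.le ht.le, mul_comm t s, mul_left_comm, ← mul_assoc (s ^ (1 + α)),
    ← rpow_add hs]
  norm_num

theorem integrableOn_one_sub_exp_neg_mul_mul_rpow (hα : 0 < α) (hα1 : α < 1) {s : ℝ}
    (hs : 0 ≤ s) : IntegrableOn (fun t : ℝ => (1 - exp (-(t * s))) * t ^ (-1 - α)) (Ioi 0) := by
  rcases hs.eq_or_lt with rfl | hs
  · simp
  have h : IntegrableOn (fun t => (1 - exp (-(s * t))) * (s * t) ^ (-1 - α)) (Ioi 0) := by
    rw [integrableOn_Ioi_comp_mul_left_iff (fun u => (1 - exp (-u)) * u ^ (-1 - α)) 0 hs,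
      mul_zero]
    exact integrableOn_one_sub_exp_neg_mul_rpow hα hα1
  exact (integrableOn_congr_fun (fun t ht => (one_sub_exp_neg_mul_mul_rpow_eq hs ht).symm)
    measurableSet_Ioi).1 (h.const_mul _)

theorem integral_one_sub_exp_neg_mul_mul_rpow (hα : 0 < α) {s : ℝ} (hs : 0 ≤ s) :
    ∫ t in Ioi 0, (1 - exp (-(t * s))) * t ^ (-1 - α) =
      (∫ u in Ioi 0, (1 - exp (-u)) * u ^ (-1 - α)) * s ^ α := by
  rcases hs.eq_or_lt with rfl | hs
  · simp [zero_rpow hα.ne']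
  rw [setIntegral_congr_fun measurableSet_Ioi fun t ht => one_sub_exp_neg_mul_mul_rpow_eq hs ht,
    integral_const_mul,
    integral_comp_mul_left_Ioi (fun u => (1 - exp (-u)) * u ^ (-1 - α)) 0 hs, mul_zero,
    smul_eq_mul, ← mul_assoc, ← rpow_neg_one, ← rpow_add hs, mul_comm]
  norm_num

theorem Matrix.condNegSemidef_rpow_norm_sub_sq {E : Type*} [NormedAddCommGroup E]
    [InnerProductSpace ℝ E] (v : n → E) (hα : 0 < α) (hα1 : α < 1) :
    (of fun i j => (‖v i - v j‖ ^ 2) ^ α).CondNegSemidef := by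
  set C := ∫ u in Ioi 0, (1 - exp (-u)) * u ^ (-1 - α)
  have hC : 0 < C := integral_one_sub_exp_neg_mul_rpow_pos hα hα1
  have hrepr : (of fun i j => (‖v i - v j‖ ^ 2) ^ α) = C⁻¹ • of fun i j =>
      ∫ t in Ioi 0, (1 - exp (-(t * ‖v i - v j‖ ^ 2))) * t ^ (-1 - α) := by
    ext i j
    rw [smul_apply, of_apply, of_apply, integral_one_sub_exp_neg_mul_mul_rpow hα (by positivity),
      smul_eq_mul, inv_mul_cancel_left₀ hC.ne']
  have hK : ∀ t ∈ Ioi (0 : ℝ),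
      (of fun i j => (1 - exp (-(t * ‖v i - v j‖ ^ 2))) * t ^ (-1 - α)).CondNegSemidef := by
    intro t ht
    convert ((posSemidef_exp_neg_mul_norm_sub_sq v (le_of_lt ht)).condNegSemidef_one_sub).smul
      (rpow_nonneg (le_of_lt ht) (-1 - α)) using 1
    ext i j
    simp [mul_comm]
  rw [hrepr]
  exact (condNegSemidef_integral (ae_restrict_of_forall_mem measurableSet_Ioi hK)
    fun i j => integrableOn_one_sub_exp_neg_mul_mul_rpow hα hα1 (by positivity)).smul
    (inv_nonneg.2 hC.le)

end FractionalPower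

end Schoenberg

/-- if the `ε`-snowflake of a finite metric space `X` embeds isometrically
into some Euclidean space, then so does the `ε'`-snowflake for every `0 < ε' ≤ ε`. -/
theorem snowflake_embedding_monotone {X : Type*} [MetricSpace X] [Fintype X]
    (ε ε' : ℝ) (hε' : 0 < ε') (hle : ε' ≤ ε)
    (m : ℕ) (φ : X → EuclideanSpace ℝ (Fin m))
    (hφ : ∀ u v : X, ‖φ u - φ v‖ = dist u v ^ ε) :
    ∃ (m' : ℕ) (ψ : X → EuclideanSpace ℝ (Fin m')),
      ∀ u v : X, ‖ψ u - ψ v‖ = dist u v ^ ε' := by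
  rcases hle.eq_or_lt with rfl | hlt
  · exact ⟨m, φ, hφ⟩
  have hε : 0 < ε := hε'.trans hlt
  have hsnow : (Matrix.of fun u v => (‖φ u - φ v‖ ^ 2) ^ (ε' / ε)) =
      Matrix.of fun u v => (dist u v ^ ε') ^ 2 := by
    ext u v
    have hd := dist_nonneg (x := u) (y := v)
    rw [Matrix.of_apply, Matrix.of_apply, hφ, ← Real.rpow_natCast, ← Real.rpow_natCast,
      ← Real.rpow_mul hd, ← Real.rpow_mul hd, ← Real.rpow_mul hd]
    congr 1
    field_simp
  have hcnd := Matrix.condNegSemidef_rpow_norm_sub_sq φ (div_pos hε' hε) ((div_lt_one hε).2 hlt)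
  rw [hsnow] at hcnd
  obtain ⟨ψ, hψ⟩ := hcnd.exists_norm_sub_sq_eq (Matrix.IsSymm.ext fun u v => by simp [dist_comm])
    fun u => by simp [Real.zero_rpow hε'.ne']
  refine ⟨Fintype.card X, LinearIsometryEquiv.piLpCongrLeft 2 ℝ ℝ (Fintype.equivFin X) ∘ ψ,
    fun u v => ?_⟩
  rw [Function.comp_apply, Function.comp_apply, ← map_sub, LinearIsometryEquiv.norm_map]
  exact (sq_eq_sq₀ (norm_nonneg _) (by positivity)).1 (hψ u v)
end
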